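/- For φ ∈ (−π/2, 0], define λ(φ) = (2 cos φ + 2 cos φ sin φ)/8 and λ'(φ) = (−2 sin φ + 2 cos 2φ)/8, and set ṡ(φ) = 2λ(φ)·cos φ − λ'(φ)·sin φ and ν̇(φ) = 2λ(φ)·sin φ + λ'(φ)·cos φ. Then ν̇(φ) > 0 and the identity (8/(27·ν̇(φ)))·(9·ṡ(φ)·ν̇(φ)² + ṡ(φ)³ + (ṡ(φ)² − 3ν̇(φ)²)^{3/2}) = (2 cos φ + 2 cos φ sin φ)/4 holds for every φ ∈ (−π/2, 0]. -/

import Mathlib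

/-!
Writing `s = sin φ`, `c = cos φ` and using `c² = 1 - s²`, everything factors through `1 + s`:
`λ = ν̇ = c(1 + s)/4`, `λ' = (1 + s)(1 - 2s)/4` and `ṡ = (1 + s)(2 - s)/4`. In particular
`ṡ² - 3ν̇² = λ'²`, so for `λ' ≥ 0` the power `3/2` is just `λ'³`, and the identity becomes a
polynomial identity in `s` once `ν̇²` is replaced by `(1 - s²)(1 + s)²/16`.
-/

open Real

namespace EulerMumford

-- The paper's `λ`, `λ'`, `ṡ`, `ν̇`, and `𝕱²` on its branch `0 < ν̇ ≤ ṡ/2`.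
noncomputable def profile (φ : ℝ) : ℝ := (2 * cos φ + 2 * cos φ * sin φ) / 8

noncomputable def profileDeriv (φ : ℝ) : ℝ := (-2 * sin φ + 2 * cos (2 * φ)) / 8

noncomputable def sDot (φ : ℝ) : ℝ := 2 * profile φ * cos φ - profileDeriv φ * sin φ

noncomputable def nuDot (φ : ℝ) : ℝ := 2 * profile φ * sin φ + profileDeriv φ * cos φ

noncomputable def metricSq (u v : ℝ) : ℝ :=
  8 / (27 * v) * (9 * u * v ^ 2 + u ^ 3 + (u ^ 2 - 3 * v ^ 2) ^ ((3 : ℝ) / 2))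

theorem metricSq_eq_of_sq_sub_three_mul_sq {u v w : ℝ} (hw : 0 ≤ w)
    (h : u ^ 2 - 3 * v ^ 2 = w ^ 2) :
    metricSq u v = 8 / (27 * v) * (9 * u * v ^ 2 + u ^ 3 + w ^ 3) := by
  have hpow : (w ^ 2) ^ ((3 : ℝ) / 2) = w ^ 3 := by
    rw [← rpow_natCast w 2, ← rpow_mul hw, ← rpow_natCast]
    norm_num
  rw [metricSq, h, hpow]

theorem profile_eq (φ : ℝ) : profile φ = cos φ * (1 + sin φ) / 4 := by
  rw [profile]; ring

theorem profileDeriv_eq (φ : ℝ) : profileDeriv φ = (1 + sin φ) * (1 - 2 * sin φ) / 4 := by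
  rw [profileDeriv, cos_two_mul_eq_one_sub]; ring

theorem nuDot_eq_profile (φ : ℝ) : nuDot φ = profile φ := by
  rw [nuDot, profile_eq, profileDeriv_eq]
  ring

theorem sDot_eq (φ : ℝ) : sDot φ = (1 + sin φ) * (2 - sin φ) / 4 := by
  rw [sDot, profile_eq, profileDeriv_eq]
  linear_combination ((1 + sin φ) / 2) * sin_sq_add_cos_sq φ

theorem sDot_sq_sub_three_mul_nuDot_sq (φ : ℝ) :
    sDot φ ^ 2 - 3 * nuDot φ ^ 2 = profileDeriv φ ^ 2 := by
  rw [sDot_eq, nuDot_eq_profile, profile_eq, profileDeriv_eq]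
  linear_combination (-3 * (1 + sin φ) ^ 2 / 16) * sin_sq_add_cos_sq φ

theorem nuDot_pos {φ : ℝ} (hφ : φ ∈ Set.Ioo (-(π / 2)) (π / 2)) : 0 < nuDot φ := by
  have hc : 0 < cos φ := cos_pos_of_mem_Ioo hφ
  have hs : 0 < 1 + sin φ := by nlinarith [sin_sq_add_cos_sq φ, sin_le_one φ]
  rw [nuDot_eq_profile, profile_eq]
  positivity

theorem profileDeriv_nonneg {φ : ℝ} (hφ : sin φ ≤ 1 / 2) : 0 ≤ profileDeriv φ := by
  rw [profileDeriv_eq]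
  have : 0 ≤ 1 + sin φ := by linarith [neg_one_le_sin φ]
  have : 0 ≤ 1 - 2 * sin φ := by linarith
  positivity

theorem metricSq_sDot_nuDot {φ : ℝ} (hν : nuDot φ ≠ 0) (hderiv : 0 ≤ profileDeriv φ) :
    metricSq (sDot φ) (nuDot φ) = 2 * profile φ := by
  rw [metricSq_eq_of_sq_sub_three_mul_sq hderiv (sDot_sq_sub_three_mul_nuDot_sq φ),
    ← nuDot_eq_profile, div_mul_eq_mul_div, div_eq_iff (mul_ne_zero (by norm_num) hν)]
  have hν2 : nuDot φ ^ 2 = (1 - sin φ ^ 2) * (1 + sin φ) ^ 2 / 16 := by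
    rw [nuDot_eq_profile, profile_eq, ← cos_sq']; ring
  rw [sDot_eq, profileDeriv_eq]
  linear_combination (18 * (1 + sin φ) * (2 - sin φ) - 54) * hν2

end EulerMumford

open EulerMumford in
theorem stmt_9 (φ : ℝ) (hφ : φ ∈ Set.Ioc (-(π/2)) 0) :
    0 < 2 * ((2 * Real.cos φ + 2 * Real.cos φ * Real.sin φ) / 8) * Real.sin φ
        + ((-2 * Real.sin φ + 2 * Real.cos (2*φ)) / 8) * Real.cos φ ∧
    (8 / (27 * (2 * ((2 * Real.cos φ + 2 * Real.cos φ * Real.sin φ) / 8) * Real.sin φ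
        + ((-2 * Real.sin φ + 2 * Real.cos (2*φ)) / 8) * Real.cos φ)))
      * (9 * (2 * ((2 * Real.cos φ + 2 * Real.cos φ * Real.sin φ) / 8) * Real.cos φ
            - ((-2 * Real.sin φ + 2 * Real.cos (2*φ)) / 8) * Real.sin φ)
          * (2 * ((2 * Real.cos φ + 2 * Real.cos φ * Real.sin φ) / 8) * Real.sin φ
            + ((-2 * Real.sin φ + 2 * Real.cos (2*φ)) / 8) * Real.cos φ)^2
        + (2 * ((2 * Real.cos φ + 2 * Real.cos φ * Real.sin φ) / 8) * Real.cos φ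
            - ((-2 * Real.sin φ + 2 * Real.cos (2*φ)) / 8) * Real.sin φ)^3
        + ((2 * ((2 * Real.cos φ + 2 * Real.cos φ * Real.sin φ) / 8) * Real.cos φ
              - ((-2 * Real.sin φ + 2 * Real.cos (2*φ)) / 8) * Real.sin φ)^2
            - 3 * (2 * ((2 * Real.cos φ + 2 * Real.cos φ * Real.sin φ) / 8) * Real.sin φ
              + ((-2 * Real.sin φ + 2 * Real.cos (2*φ)) / 8) * Real.cos φ)^2)
          ^ ((3:ℝ)/2))
      = (2 * Real.cos φ + 2 * Real.cos φ * Real.sin φ) / 4 := by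
  obtain ⟨hlo, hhi⟩ := hφ
  have hν : 0 < nuDot φ := nuDot_pos ⟨hlo, hhi.trans_lt (by positivity)⟩
  have hsin : sin φ ≤ 1 / 2 :=
    (sin_nonpos_of_nonpos_of_neg_pi_le hhi (by linarith [pi_pos])).trans (by norm_num)
  have key := metricSq_sDot_nuDot hν.ne' (profileDeriv_nonneg hsin)
  rw [profile] at key
  exact ⟨hν, key.trans (by ring)⟩
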